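/- arXiv:1212.4449 — 2 statements merged into one kernel-verified Lean document; each statement's English description precedes it below -/
import Mathlib

section
/- Let a_1, ..., a_n be nonzero vectors in ℝ^d, let S be a circuit of this family, and let M ⊆ {1,...,n} be a subset containing no circuit (i.e. (a_i)_{i∈M} is linearly independent) such that for every i ∈ S with i ∉ M, the set M ∪ {i} contains no circuit. Then span{a_i : i ∈ S} is not contained in span{a_i : i ∈ M}, and consequently the subspace span{a_i : i ∈ M}^⊥ ∩ span{a_i : i ∈ S}^⊥ of ℝ^d has codimension strictly greater than |M|. -/
/-- A circuit: a minimal subset of indices whose vectors are linearly dependent. -/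
def IsCircuit (R : Type*) [CommRing R] {V : Type*} [AddCommGroup V] [Module R V]
    {n : ℕ} (a : Fin n → V) (S : Finset (Fin n)) : Prop :=
  ¬ LinearIndependent R (fun i : S => a (i : Fin n)) ∧
    ∀ T : Finset (Fin n), T ⊂ S → LinearIndependent R (fun i : T => a (i : Fin n))

/-- The linear functional `x ↦ ∑ j, v j * x j` on `ℝ^d`. -/
noncomputable def dotMap {d : ℕ} (v : Fin d → ℝ) : (Fin d → ℝ) →ₗ[ℝ] ℝ :=
  ∑ j, v j • LinearMap.proj j

/-- The common annihilator `{x : a_i · x = 0 for all i ∈ T}` of the vectors indexed by `T`. -/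
noncomputable def ann {n d : ℕ} (a : Fin n → (Fin d → ℝ)) (T : Finset (Fin n)) :
    Submodule ℝ (Fin d → ℝ) :=
  ⨅ i ∈ T, LinearMap.ker (dotMap (a i))

/-! Since `S` is dependent and `M` is not, some `i ∈ S` lies outside `M`; independence of
`M ∪ {i}` puts `a i ∈ span S` outside `span M`. So `span (S ∪ M)` has dimension `> |M|`, and
`ann S ⊓ ann M = ann (S ∪ M)` is its annihilator under the dot-product duality, of dimension
`d - dim span (S ∪ M)`. -/

open Module Submodule

section LinearIndependence

variable {K V ι : Type*} [DivisionRing K] [AddCommGroup V] [Module K V]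

theorem not_span_image_le_of_forall_linearIndepOn_insert {a : ι → V} {S M : Set ι}
    (hS : ¬ LinearIndepOn K a S) (hM : LinearIndepOn K a M)
    (hMS : ∀ i ∈ S, i ∉ M → LinearIndepOn K a (insert i M)) :
    ¬ span K (a '' S) ≤ span K (a '' M) := by
  intro hle
  by_cases hSM : S ⊆ M
  · exact hS (hM.mono hSM)
  obtain ⟨i, hiS, hiM⟩ := Set.not_subset.1 hSM
  exact ((linearIndepOn_insert hiM).1 (hMS i hiS hiM)).2
    (hle (subset_span (Set.mem_image_of_mem a hiS)))

theorem card_lt_finrank_span_image_union [DecidableEq ι] {a : ι → V} {S M : Finset ι}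
    (hM : LinearIndepOn K a (M : Set ι)) (hSM : ¬ span K (a '' S) ≤ span K (a '' M)) :
    M.card < finrank K (span K (a '' ↑(S ∪ M))) := by
  have hrankM : finrank K (span K (a '' M)) = M.card := by
    rw [Set.image_eq_range, finrank_span_eq_card hM]
    simp
  have hlt : span K (a '' M) < span K (a '' ↑(S ∪ M)) := by
    rw [Finset.coe_union, Set.image_union, span_union]
    exact lt_of_le_of_ne le_sup_right fun heq => hSM (heq ▸ le_sup_left)
  have : FiniteDimensional K (span K (a '' ↑(S ∪ M))) :=
    .span_of_finite K ((S ∪ M).finite_toSet.image a)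
  exact hrankM ▸ finrank_lt_finrank_of_lt hlt

end LinearIndependence

theorem finrank_iInf_ker_add_finrank_span {K V ι : Type*} [Field K] [AddCommGroup V]
    [Module K V] [FiniteDimensional K V] (f : ι → Dual K V) (T : Set ι) :
    finrank K ↥(⨅ i ∈ T, LinearMap.ker (f i)) + finrank K (span K (f '' T)) = finrank K V := by
  have hcoann : (span K (f '' T)).dualCoannihilator = ⨅ i ∈ T, LinearMap.ker (f i) := by
    ext x
    rw [← SetLike.mem_coe, coe_dualCoannihilator_span]
    simp [mem_iInf]
  rw [← hcoann, add_comm]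
  exact Subspace.finrank_add_finrank_dualCoannihilator_eq _

theorem dotMap_eq_dotProductEquiv {d : ℕ} (v : Fin d → ℝ) :
    dotMap v = dotProductEquiv ℝ (Fin d) v := by
  ext x
  simp [dotMap, dotProduct]

theorem finrank_ann_add_finrank_span {n d : ℕ} (a : Fin n → (Fin d → ℝ)) (T : Finset (Fin n)) :
    finrank ℝ (ann a T) + finrank ℝ (span ℝ (a '' T)) = d := by
  let e := dotProductEquiv ℝ (Fin d)
  have hspan : span ℝ ((e ∘ a) '' T) = (span ℝ (a '' T)).map (e : (Fin d → ℝ) →ₗ[ℝ] _) := by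
    rw [map_span, Set.image_comp]; rfl
  have hann : ann a T = ⨅ i ∈ (T : Set (Fin n)), LinearMap.ker ((e ∘ a) i) := by
    simp [ann, dotMap_eq_dotProductEquiv, e]
  have := finrank_iInf_ker_add_finrank_span (e ∘ a) T
  rwa [← hann, hspan, LinearEquiv.finrank_map_eq, finrank_fin_fun] at this

theorem ann_union {n d : ℕ} (a : Fin n → (Fin d → ℝ)) (S M : Finset (Fin n)) :
    ann a (S ∪ M) = ann a S ⊓ ann a M :=
  Finset.iInf_union

theorem vanishing_lemma_codim_general {n d : ℕ} (a : Fin n → (Fin d → ℝ))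
    (S M : Finset (Fin n)) (hS : IsCircuit ℝ a S)
    (hM : LinearIndependent ℝ (fun i : M => a (i : Fin n)))
    (hMS : ∀ i ∈ S, i ∉ M →
      LinearIndependent ℝ (fun i : (insert i M : Finset (Fin n)) => a (i : Fin n))) :
    ¬ (Submodule.span ℝ (a '' (S : Set (Fin n))) ≤
        Submodule.span ℝ (a '' (M : Set (Fin n)))) ∧
      Module.finrank ℝ ↥(ann a S ⊓ ann a M) < d - M.card := by
  have hnle : ¬ span ℝ (a '' S) ≤ span ℝ (a '' M) :=
    not_span_image_le_of_forall_linearIndepOn_insert hS.1 hM fun i hiS hiM =>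
      Finset.coe_insert i M ▸ hMS i hiS hiM
  have hcard := card_lt_finrank_span_image_union hM hnle
  have hsum := finrank_ann_add_finrank_span a (S ∪ M)
  rw [ann_union] at hsum
  exact ⟨hnle, by omega⟩

theorem vanishing_lemma_codim {n d : ℕ} (a : Fin n → (Fin d → ℝ))
    (ha : ∀ i, a i ≠ 0) (S M : Finset (Fin n)) (hS : IsCircuit ℝ a S)
    (hM : LinearIndependent ℝ (fun i : M => a (i : Fin n)))
    (hMS : ∀ i ∈ S, i ∉ M →
      LinearIndependent ℝ (fun i : (insert i M : Finset (Fin n)) => a (i : Fin n))) :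
    ¬ (Submodule.span ℝ (a '' (S : Set (Fin n))) ≤
        Submodule.span ℝ (a '' (M : Set (Fin n)))) ∧
      Module.finrank ℝ ↥(ann a S ⊓ ann a M) < d - M.card :=
  vanishing_lemma_codim_general a S M hS hM hMS
end

section
/- Let E_i = q_i ∂/∂q_i and let S = S^+ ⊔ S^− be a split circuit with corresponding monomial q^{β_S} = ∏_{i∈S^+} q_i / ∏_{i∈S^−} q_i. Then the function f(q,t) = ∏_{i=1}^n (1 + q_i t^{a_i})^ℏ · ∏_j t_j^{−c_j} satisfies the differential relation (∏_{i∈S^+} E_i ∏_{i∈S^−}(ℏ − E_i) − q^{β_S} ∏_{i∈S^+}(ℏ − E_i) ∏_{i∈S^−} E_i) f = 0, where the operators E_i applied to f act as multiplication by ℏ q_i t^{a_i}/(1+q_i t^{a_i}). -/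
open Complex

/-- The monomial `t^{a} = ∏ j, t_j^{a_j}` for `a ∈ ℤ^d`. -/
noncomputable def tmon {d : ℕ} (t : Fin d → ℂ) (a : Fin d → ℤ) : ℂ :=
  ∏ j, t j ^ a j

/-- The (principal branch of the) mirror integrand
`f(q,t) = ∏ i (1 + q_i t^{a_i})^ℏ · ∏ j t_j^{-c_j}`. -/
noncomputable def mirrorF {n d : ℕ} (a : Fin n → Fin d → ℤ) (ℏ : ℂ) (c : Fin d → ℂ)
    (q : Fin n → ℂ) (t : Fin d → ℂ) : ℂ :=
  (∏ i, (1 + q i * tmon t (a i)) ^ ℏ) * ∏ j, t j ^ (-c j)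

/-!
Writing `x_i = q_i t^{a_i}`, one has `ℏ - u_i = ℏ / (1 + x_i)` and `u_i = (ℏ - u_i) x_i`.
Both sides of the relation therefore carry the same factor `∏_{S^+ ∪ S^-} (ℏ - u_i)`, and what
remains is `∏_{S^+} x_i = q^{β_S} ∏_{S^-} x_i`, which is the circuit relation
`∑_{S^+} a_i = ∑_{S^-} a_i` read through the monomial map `a ↦ t^a`.
-/

theorem zpow_finset_sum₀ {G ι : Type*} [CommGroupWithZero G] {g : G} (hg : g ≠ 0)
    (s : Finset ι) (k : ι → ℤ) : g ^ (∑ i ∈ s, k i) = ∏ i ∈ s, g ^ k i := by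
  classical
  induction s using Finset.induction with
  | empty => simp
  | insert i s hi ih => rw [Finset.sum_insert hi, Finset.prod_insert hi, zpow_add₀ hg, ih]

theorem tmon_sum {d n : ℕ} {t : Fin d → ℂ} (ht : ∀ j, t j ≠ 0)
    (a : Fin n → Fin d → ℤ) (S : Finset (Fin n)) :
    tmon t (∑ i ∈ S, a i) = ∏ i ∈ S, tmon t (a i) := by
  simp only [tmon, Finset.sum_apply, zpow_finset_sum₀ (ht _)]
  exact Finset.prod_comm

theorem prod_mul_tmon_eq_of_sum_eq {d n : ℕ} {t : Fin d → ℂ} (ht : ∀ j, t j ≠ 0)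
    {q : Fin n → ℂ} (hq : ∀ i, q i ≠ 0) {a : Fin n → Fin d → ℤ} {Sp Sm : Finset (Fin n)}
    (hrel : ∑ i ∈ Sp, a i = ∑ i ∈ Sm, a i) :
    ∏ i ∈ Sp, q i * tmon t (a i) =
      (∏ i ∈ Sp, q i) / (∏ i ∈ Sm, q i) * ∏ i ∈ Sm, q i * tmon t (a i) := by
  have hqSm : ∏ i ∈ Sm, q i ≠ 0 := Finset.prod_ne_zero_iff.2 fun i _ => hq i
  rw [Finset.prod_mul_distrib, Finset.prod_mul_distrib, ← tmon_sum ht, ← tmon_sum ht, hrel]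
  field_simp

theorem prod_mul_prod_eq_of_eq_mul {R ι : Type*} [CommSemiring R] {Sp Sm : Finset ι}
    {u w x : ι → R} {β : R} (huwx : ∀ i, u i = w i * x i)
    (hx : ∏ i ∈ Sp, x i = β * ∏ i ∈ Sm, x i) :
    (∏ i ∈ Sp, u i) * ∏ i ∈ Sm, w i = β * ((∏ i ∈ Sp, w i) * ∏ i ∈ Sm, u i) := by
  simp only [huwx, Finset.prod_mul_distrib, hx]
  ring

theorem mul_div_one_add_eq_sub_mul {K : Type*} [Field K] {ℏ x : K} (hx : 1 + x ≠ 0) :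
    ℏ * x / (1 + x) = (ℏ - ℏ * x / (1 + x)) * x := by
  field_simp
  ring

theorem mirrorF_gkz_circuit_relation_general {n d : ℕ} (a : Fin n → Fin d → ℤ)
    (ℏ : ℂ) (c : Fin d → ℂ) (q : Fin n → ℂ) (t : Fin d → ℂ)
    (ht : ∀ j, t j ≠ 0) (hq : ∀ i, q i ≠ 0)
    (hx : ∀ i, 1 + q i * tmon t (a i) ≠ 0)
    (Sp Sm : Finset (Fin n))
    (hrel : ∑ i ∈ Sp, a i = ∑ i ∈ Sm, a i)
    (u : Fin n → ℂ)
    (hu : ∀ i, u i = ℏ * (q i * tmon t (a i)) / (1 + q i * tmon t (a i)))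
    (qβ : ℂ) (hqβ : qβ = (∏ i ∈ Sp, q i) / ∏ i ∈ Sm, q i) :
    ((∏ i ∈ Sp, u i) * ∏ i ∈ Sm, (ℏ - u i) -
        qβ * ((∏ i ∈ Sp, (ℏ - u i)) * ∏ i ∈ Sm, u i)) * mirrorF a ℏ c q t = 0 := by
  have hux : ∀ i, u i = (ℏ - u i) * (q i * tmon t (a i)) := fun i => by
    rw [hu i]
    exact mul_div_one_add_eq_sub_mul (hx i)
  have hmon := prod_mul_tmon_eq_of_sum_eq ht hq hrel
  rw [← hqβ] at hmon
  rw [prod_mul_prod_eq_of_eq_mul hux hmon, sub_self, zero_mul]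

/-- The GKZ circuit relation satisfied by the mirror integrand, where the
operator `E_i = q_i ∂/∂q_i` acts on `f` as multiplication by
`u_i = ℏ q_i t^{a_i} / (1 + q_i t^{a_i})`. -/
theorem mirrorF_gkz_circuit_relation {n d : ℕ} (a : Fin n → Fin d → ℤ)
    (ℏ : ℂ) (c : Fin d → ℂ) (q : Fin n → ℂ) (t : Fin d → ℂ)
    (ht : ∀ j, t j ≠ 0) (hq : ∀ i, q i ≠ 0)
    (hx : ∀ i, 1 + q i * tmon t (a i) ≠ 0)
    (Sp Sm : Finset (Fin n)) (hdisj : Disjoint Sp Sm)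
    (hrel : ∑ i ∈ Sp, a i = ∑ i ∈ Sm, a i)
    (u : Fin n → ℂ)
    (hu : ∀ i, u i = ℏ * (q i * tmon t (a i)) / (1 + q i * tmon t (a i)))
    (qβ : ℂ) (hqβ : qβ = (∏ i ∈ Sp, q i) / ∏ i ∈ Sm, q i) :
    ((∏ i ∈ Sp, u i) * ∏ i ∈ Sm, (ℏ - u i) -
        qβ * ((∏ i ∈ Sp, (ℏ - u i)) * ∏ i ∈ Sm, u i)) * mirrorF a ℏ c q t = 0 :=
  mirrorF_gkz_circuit_relation_general a ℏ c q t ht hq hx Sp Sm hrel u hu qβ hqβ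
end
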